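/- arXiv:1305.4267 — 3 statements merged into one kernel-verified Lean document; each statement's English description precedes it below -/
import Mathlib

section
/- For every cube Q in ℝⁿ there exists a shift parameter t ∈ {0, 1/3}ⁿ and a cube Q_t belonging to the shifted dyadic grid 𝒟_t = {2^{-k}([0,1)ⁿ + m + (-1)^k t) : k ∈ ℤ, m ∈ ℤⁿ} such that Q ⊆ Q_t and the side length of Q_t is at most 6 times the side length of Q. -/
open MeasureTheory ENNReal Set
open scoped BigOperators

noncomputable section

abbrev Rn (n : ℕ) := Fin n → ℝ

/-- An axis-parallel half-open cube with corner `c` and side length `l`. -/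
def cube {n : ℕ} (c : Rn n) (l : ℝ) : Set (Rn n) :=
  {x | ∀ i, c i ≤ x i ∧ x i < c i + l}

/-- `σ(Q) = ∫_Q σ dx`. -/
def wtI {n : ℕ} (σ : Rn n → ℝ≥0∞) (Q : Set (Rn n)) : ℝ≥0∞ := ∫⁻ x in Q, σ x

/-- `𝔼^σ_Q f = σ(Q)⁻¹ ∫_Q f σ`. -/
def avgE {n : ℕ} (σ f : Rn n → ℝ≥0∞) (Q : Set (Rn n)) : ℝ≥0∞ :=
  (wtI σ Q)⁻¹ * ∫⁻ x in Q, f x * σ x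

/-- The cube `2^{-k}([0,1)ⁿ + m + (-1)^k t)` of the shifted dyadic grid. -/
def gridCube (n : ℕ) (k : ℤ) (m : Fin n → ℤ) (t : Fin n → ℝ) : Set (Rn n) :=
  {x | ∀ i, (2:ℝ) ^ (-k) * ((m i : ℝ) + (-1:ℝ) ^ k * t i) ≤ x i ∧
       x i < (2:ℝ) ^ (-k) * ((m i : ℝ) + (-1:ℝ) ^ k * t i + 1)}

/-- The shifted dyadic grid `𝒟_t`. -/
def shiftedGrid (n : ℕ) (t : Fin n → ℝ) : Set (Set (Rn n)) :=
  {Q | ∃ (k : ℤ) (m : Fin n → ℤ), Q = gridCube n k m t}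

/-- Abstract dyadic grid: cubes of dyadic side lengths, nested or disjoint,
and for each scale the cubes of that side length cover `ℝⁿ`. -/
def IsDyadicGrid {n : ℕ} (𝒟 : Set (Set (Rn n))) : Prop :=
  (∀ Q ∈ 𝒟, ∃ (c : Rn n) (k : ℤ), Q = cube c ((2:ℝ) ^ k)) ∧
  (∀ Q ∈ 𝒟, ∀ R ∈ 𝒟, Q ∩ R = Q ∨ Q ∩ R = R ∨ Q ∩ R = ∅) ∧
  (∀ k : ℤ, (⋃ Q ∈ {Q | Q ∈ 𝒟 ∧ ∃ c : Rn n, Q = cube c ((2:ℝ) ^ k)}, Q) = univ)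

/-- The multilinear fractional maximal operator `ℳ_α`. -/
def MM (n m : ℕ) (α : ℝ) (g : Fin m → Rn n → ℝ≥0∞) (x : Rn n) : ℝ≥0∞ :=
  ⨆ (c : Rn n) (l : ℝ) (_ : 0 < l) (_ : x ∈ cube c l),
    ∏ i, (volume (cube c l) ^ (-(1 - α / ((m : ℝ) * (n : ℝ)))) * ∫⁻ y in cube c l, g i y)

/-- The multilinear fractional maximal operator restricted to a grid `𝒟`. -/
def MMD (n m : ℕ) (α : ℝ) (𝒟 : Set (Set (Rn n))) (g : Fin m → Rn n → ℝ≥0∞)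
    (x : Rn n) : ℝ≥0∞ :=
  ⨆ (Q : Set (Rn n)) (_ : Q ∈ 𝒟) (_ : x ∈ Q),
    ∏ i, (volume Q ^ (-(1 - α / ((m : ℝ) * (n : ℝ)))) * ∫⁻ y in Q, g i y)

/-- The bilinear fractional maximal operator `ℳ_α(g₁,g₂)`. -/
def M2 (n : ℕ) (α : ℝ) (g₁ g₂ : Rn n → ℝ≥0∞) (x : Rn n) : ℝ≥0∞ :=
  ⨆ (c : Rn n) (l : ℝ) (_ : 0 < l) (_ : x ∈ cube c l),
    (volume (cube c l) ^ (-(1 - α / (2 * (n : ℝ)))) * ∫⁻ y in cube c l, g₁ y) *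
      (volume (cube c l) ^ (-(1 - α / (2 * (n : ℝ)))) * ∫⁻ y in cube c l, g₂ y)

/-- The bilinear dyadic fractional maximal operator `ℳ^𝒟_α(g₁,g₂)`. -/
def M2D (n : ℕ) (α : ℝ) (𝒟 : Set (Set (Rn n))) (g₁ g₂ : Rn n → ℝ≥0∞) (x : Rn n) : ℝ≥0∞ :=
  ⨆ (Q : Set (Rn n)) (_ : Q ∈ 𝒟) (_ : x ∈ Q),
    (volume Q ^ (-(1 - α / (2 * (n : ℝ)))) * ∫⁻ y in Q, g₁ y) *
      (volume Q ^ (-(1 - α / (2 * (n : ℝ)))) * ∫⁻ y in Q, g₂ y)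

/-- Sawyer's bilinear testing constant `[w⃗,v]_{S_{P⃗,q}}`. -/
def sawyer2 (n : ℕ) (α p₁ p₂ q : ℝ) (σ₁ σ₂ v : Rn n → ℝ≥0∞) : ℝ≥0∞ :=
  ⨆ (c : Rn n) (l : ℝ) (_ : 0 < l),
    (∫⁻ x in cube c l,
        M2 n α ((cube c l).indicator σ₁) ((cube c l).indicator σ₂) x ^ q * v x) ^ (1/q) /
      (wtI σ₁ (cube c l) ^ (1/p₁) * wtI σ₂ (cube c l) ^ (1/p₂))

/-- Sawyer's multilinear testing constant. -/
def sawyerM (n m : ℕ) (α q : ℝ) (p : Fin m → ℝ) (σ : Fin m → Rn n → ℝ≥0∞)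
    (v : Rn n → ℝ≥0∞) : ℝ≥0∞ :=
  ⨆ (c : Rn n) (l : ℝ) (_ : 0 < l),
    (∫⁻ x in cube c l, MM n m α (fun i => (cube c l).indicator (σ i)) x ^ q * v x) ^ (1/q) /
      ∏ i, wtI (σ i) (cube c l) ^ (1 / p i)

/-- The principal cubes of `f` relative to `σ` inside `Qbar`, generation by generation. -/
def principalCubes {n : ℕ} (𝒟 : Set (Set (Rn n))) (σ f : Rn n → ℝ≥0∞)
    (Qbar : Set (Rn n)) : ℕ → Set (Set (Rn n))
  | 0 => {Qbar}
  | k + 1 => {G' | G' ∈ 𝒟 ∧ ∃ G ∈ principalCubes 𝒟 σ f Qbar k, G' ⊆ G ∧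
      4 * avgE σ f G < avgE σ f G' ∧
      ∀ G'' ∈ 𝒟, G' ⊆ G'' → G'' ⊆ G → 4 * avgE σ f G < avgE σ f G'' → G'' = G'}


/-- If `[a, a + l]` overruns the cell `[m δ, (m + 1) δ)` of `a`, then `a` lies within `δ / 3` of
`(m + 1) δ`, so the cell shifted by `± δ / 3` contains it. -/
lemma exists_shifted_cell_superset {δ l s : ℝ} (a : ℝ) (hδ : 0 < δ) (hl : 3 * l ≤ δ)
    (hs : s = 1 ∨ s = -1) :
    ∃ t : ℝ, (t = 0 ∨ t = 1 / 3) ∧ ∃ m : ℤ,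
      δ * (m + s * t) ≤ a ∧ a + l ≤ δ * (m + s * t + 1) := by
  obtain ⟨hfloor, hfloor_succ⟩ : ⌊a / δ⌋ * δ ≤ a ∧ a < (⌊a / δ⌋ + 1) * δ :=
    ⟨(le_div_iff₀ hδ).mp (Int.floor_le _), (div_lt_iff₀ hδ).mp (Int.lt_floor_add_one _)⟩
  rcases le_or_gt (a + l) ((⌊a / δ⌋ + 1) * δ) with hfits | hoverrun
  · exact ⟨0, Or.inl rfl, ⌊a / δ⌋, by linarith, by linarith⟩
  refine ⟨1 / 3, Or.inr rfl, ?_⟩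
  rcases hs with rfl | rfl
  · exact ⟨⌊a / δ⌋, by linarith, by linarith⟩
  · exact ⟨⌊a / δ⌋ + 1, by push_cast; linarith, by push_cast; linarith⟩

lemma exists_two_zpow_mem_Icc {x : ℝ} (hx : 0 < x) : ∃ j : ℤ, (2 : ℝ) ^ j ∈ Icc x (2 * x) := by
  obtain ⟨j, hlow, hupp⟩ := exists_mem_Ioc_zpow hx one_lt_two
  refine ⟨j + 1, hupp, ?_⟩
  rw [zpow_add_one₀ two_ne_zero, mul_comm]
  exact mul_le_mul_of_nonneg_left hlow.le zero_le_two

/-- for every cube there is a shifted dyadic cube containing it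
with side length at most `6` times larger. -/
theorem stmt0 (n : ℕ) (c : Rn n) (l : ℝ) (hl : 0 < l) :
    ∃ t : Fin n → ℝ, (∀ i, t i = 0 ∨ t i = 1/3) ∧
      ∃ (k : ℤ) (m : Fin n → ℤ),
        cube c l ⊆ gridCube n k m t ∧ (2:ℝ) ^ (-k) ≤ 6 * l := by
  obtain ⟨j, hlow, hupp⟩ := exists_two_zpow_mem_Icc (by positivity : 0 < 3 * l)
  rw [← neg_neg j] at hlow hupp
  have hsign : (-1 : ℝ) ^ (-j) = 1 ∨ (-1 : ℝ) ^ (-j) = -1 := by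
    rcases Int.even_or_odd (-j) with h | h
    · exact Or.inl h.neg_one_zpow
    · exact Or.inr h.neg_one_zpow
  choose t ht m hleft hright using fun i =>
    exists_shifted_cell_superset (c i) (zpow_pos two_pos (-(-j))) hlow hsign
  exact ⟨t, ht, -j, m, fun x hx i => ⟨(hleft i).trans (hx i).1, (hx i).2.trans_le (hright i)⟩,
    by linarith⟩
end
end

section
/- Each shifted dyadic grid 𝒟_t with t ∈ {0,1/3}ⁿ is a dyadic grid, i.e., (i) every cube in 𝒟_t has side length 2^k for some k ∈ ℤ; (ii) for any Q, R ∈ 𝒟_t, the intersection Q ∩ R is either Q, R, or empty; (iii) the cubes of each fixed side length 2^k form a partition of ℝⁿ. -/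
open MeasureTheory ENNReal Set
open scoped BigOperators

noncomputable section

/-! At scale `k`, the cube of `𝒟_t` containing `x` has index `⌊2ᵏ xᵢ - (-1)ᵏ tᵢ⌋` in coordinate `i`,
which gives the partition property at once. Because `3t ∈ ℤⁿ`, the scale-`k` index is
`⌊(j + d)/2⌋` of the scale-`(k+1)` index `j` for an integer `d`, so indices at coarser scales are
functions of indices at finer ones; two cubes of 𝒟_t that meet are therefore nested. -/

lemma Int.floor_add_intCast_div_two_congr {u v : ℝ} (d : ℤ) (h : ⌊u⌋ = ⌊v⌋) :
    ⌊(u + d) / 2⌋ = ⌊(v + d) / 2⌋ := by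
  have key (w : ℝ) : ⌊(w + d) / 2⌋ = (⌊w⌋ + d) / 2 := by
    simpa [Int.floor_add_intCast] using Int.floor_div_natCast (w + d) 2
  rw [key, key, h]

lemma exists_intCast_eq_three_mul_neg_one_zpow_mul {s : ℝ} (hs : ∃ z : ℤ, 3 * s = z) (k : ℤ) :
    ∃ d : ℤ, (d : ℝ) = 3 * ((-1) ^ k * s) := by
  obtain ⟨z, hz⟩ := hs
  rcases Int.even_or_odd k with hk | hk
  · exact ⟨z, by rw [hk.neg_one_zpow, one_mul, hz]⟩
  · exact ⟨-z, by rw [hk.neg_one_zpow, Int.cast_neg, ← hz]; ring⟩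

def gridIndex {n : ℕ} (k : ℤ) (t : Fin n → ℝ) (x : Rn n) : Fin n → ℤ :=
  fun i => ⌊2 ^ k * x i - (-1) ^ k * t i⌋

lemma mem_gridCube_iff {n : ℕ} {k : ℤ} {m : Fin n → ℤ} {t : Fin n → ℝ} {x : Rn n} :
    x ∈ gridCube n k m t ↔ gridIndex k t x = m := by
  have h2 : (0 : ℝ) < 2 ^ k := zpow_pos two_pos k
  simp only [gridCube, funext_iff, gridIndex, Int.floor_eq_iff, zpow_neg,
    inv_mul_le_iff₀ h2, lt_inv_mul_iff₀ h2]
  refine forall_congr' fun i => and_congr ?_ ?_ <;> constructor <;> intro h <;> linarith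

section

variable {n : ℕ} {t : Fin n → ℝ} (ht : ∀ i, ∃ z : ℤ, 3 * t i = z)
include ht

lemma gridIndex_eq_of_gridIndex_succ_eq {k : ℤ} {x y : Rn n}
    (h : gridIndex (k + 1) t x = gridIndex (k + 1) t y) : gridIndex k t x = gridIndex k t y := by
  funext i
  obtain ⟨d, hd⟩ := exists_intCast_eq_three_mul_neg_one_zpow_mul (ht i) k
  have halve (w : ℝ) : 2 ^ k * w - (-1) ^ k * t i
      = (2 ^ (k + 1) * w - (-1) ^ (k + 1) * t i + ((-d : ℤ) : ℝ)) / 2 := by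
    rw [Int.cast_neg, hd, zpow_add_one₀ two_ne_zero, zpow_add_one₀ (by norm_num : (-1 : ℝ) ≠ 0)]
    ring
  simp only [gridIndex, halve]
  exact Int.floor_add_intCast_div_two_congr _ (congrFun h i)

lemma gridIndex_eq_of_le {k k' : ℤ} (hk : k ≤ k') {x y : Rn n}
    (h : gridIndex k' t x = gridIndex k' t y) : gridIndex k t x = gridIndex k t y := by
  induction k, hk using Int.leInductionDown with
  | base => exact h
  | pred j _ ih => exact gridIndex_eq_of_gridIndex_succ_eq ht (by rwa [sub_add_cancel])

lemma gridCube_inter_eq_right_or_empty {k k' : ℤ} (hk : k ≤ k') (m m' : Fin n → ℤ) :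
    gridCube n k m t ∩ gridCube n k' m' t = gridCube n k' m' t ∨
      gridCube n k m t ∩ gridCube n k' m' t = ∅ := by
  refine (Set.eq_empty_or_nonempty _).symm.imp (fun ⟨x, hxQ, hxR⟩ => ?_) id
  refine Set.inter_eq_right.mpr fun y hyR => ?_
  rw [mem_gridCube_iff] at hxQ hxR hyR ⊢
  rw [gridIndex_eq_of_le ht hk (hyR.trans hxR.symm), hxQ]

end

lemma gridCube_eq_cube (n : ℕ) (k : ℤ) (m : Fin n → ℤ) (t : Fin n → ℝ) :
    gridCube n k m t = cube (fun i => 2 ^ (-k) * (m i + (-1) ^ k * t i)) (2 ^ (-k)) := by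
  ext x
  simp only [gridCube, cube, mul_add_one]

lemma iUnion_gridCube (n : ℕ) (k : ℤ) (t : Fin n → ℝ) : ⋃ m, gridCube n k m t = univ :=
  Set.eq_univ_of_forall fun x => Set.mem_iUnion.mpr ⟨gridIndex k t x, mem_gridCube_iff.mpr rfl⟩

lemma pairwise_disjoint_gridCube (n : ℕ) (k : ℤ) (t : Fin n → ℝ) :
    Pairwise fun m m' : Fin n → ℤ => Disjoint (gridCube n k m t) (gridCube n k m' t) :=
  fun _ _ hne => Set.disjoint_left.mpr fun _ hx hx' =>
    hne ((mem_gridCube_iff.mp hx).symm.trans (mem_gridCube_iff.mp hx'))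

/-- each shifted dyadic grid `𝒟_t`, `t ∈ {0,1/3}ⁿ`, is a dyadic grid. -/
theorem stmt1 (n : ℕ) (t : Fin n → ℝ) (ht : ∀ i, t i = 0 ∨ t i = 1/3) :
    (∀ Q ∈ shiftedGrid n t, ∃ (k : ℤ) (c : Rn n), Q = cube c ((2:ℝ) ^ k)) ∧
    (∀ Q ∈ shiftedGrid n t, ∀ R ∈ shiftedGrid n t,
      Q ∩ R = Q ∨ Q ∩ R = R ∨ Q ∩ R = ∅) ∧
    (∀ k : ℤ, (⋃ m : Fin n → ℤ, gridCube n k m t) = univ ∧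
      Pairwise fun m m' : Fin n → ℤ =>
        Disjoint (gridCube n k m t) (gridCube n k m' t)) := by
  have ht3 (i : Fin n) : ∃ z : ℤ, 3 * t i = z := by
    rcases ht i with h | h
    · exact ⟨0, by simp [h]⟩
    · exact ⟨1, by norm_num [h]⟩
  refine ⟨?_, ?_, fun k => ⟨iUnion_gridCube n k t, pairwise_disjoint_gridCube n k t⟩⟩
  · rintro Q ⟨k, m, rfl⟩
    exact ⟨-k, _, gridCube_eq_cube n k m t⟩
  · rintro Q ⟨k, m, rfl⟩ R ⟨k', m', rfl⟩
    rcases le_total k k' with hk | hk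
    · exact Or.inr (gridCube_inter_eq_right_or_empty ht3 hk m m')
    · rw [Set.inter_comm]
      exact (gridCube_inter_eq_right_or_empty ht3 hk m' m).imp_right Or.inr
end
end

section
/- (Calderón–Zygmund decomposition for the bilinear dyadic fractional maximal function) Let 0 ≤ α < 2n, g₁, g₂ nonnegative locally integrable functions, a = 2^{(2-α/n)(n+1)}, and Ω_k = {x : ℳ^𝒟_α(g₁,g₂)(x) > a^k}. Then Ω_k decomposes as a union of pairwise disjoint maximal dyadic cubes Q_j^k, each satisfying a^k < |Q_j^k|^{-(2-α/n)} (∫_{Q_j^k} g₁)(∫_{Q_j^k} g₂) ≤ 2^{2n-α} a^k, and the family {Q_j^k} is sparse. -/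
open MeasureTheory ENNReal Set
open scoped BigOperators

noncomputable section

/-! Write `β = 2 - α / n`, so that the averages defining `M2D` are `|Q|^(-β) ∫_Q g₁ ∫_Q g₂`.
Everything rests on one covering inequality: if disjoint cubes `P` satisfy
`t |P|^β < ∫_P g₁ ∫_P g₂` and lie in `U`, then `t |⋃ P|^β ≤ ∫_U g₁ ∫_U g₂`, strictly when the
family is nonempty and the integrals are finite. Take square roots and use that `x ↦ x^(β/2)`
is subadditive (`β ≤ 2`) and Cauchy–Schwarz for the sums `∑ (∫_P g₁ ∫_P g₂)^(1/2)`.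

Hence a dyadic cube covered by subcubes with average above `t` has average above `t`, so every
dyadic cube inside `Ω_t` lies in a cube with average above `t`; integrability bounds the size of
those, which gives the maximal cubes and the lower bound. The dyadic parent of a maximal cube
leaves `Ω_t`, which gives the upper bound `2^(nβ) t = 2^(2n-α) t`. Finally the covering
inequality inside a maximal cube `Q` at level `a t` gives `a t |Ω_{a t} ∩ Q|^β ≤ 2^(nβ) t |Q|^β`,
and `a = 2^(β(n+1))` turns this into `|Ω_{a t} ∩ Q| ≤ |Q| / 2`.
-/

namespace ENNReal

variable {ι : Type*}

theorem tsum_rpow_le_rpow_tsum (f : ι → ℝ≥0∞) {r : ℝ} (hr : 1 ≤ r) :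
    ∑' i, f i ^ r ≤ (∑' i, f i) ^ r := by
  have split : ∀ x : ℝ≥0∞, x ^ r = x * x ^ (r - 1) := fun x => by
    conv_lhs => rw [show r = 1 + (r - 1) by ring]
    rw [ENNReal.rpow_add_of_nonneg _ _ zero_le_one (sub_nonneg.2 hr), ENNReal.rpow_one]
  calc ∑' i, f i ^ r = ∑' i, f i * f i ^ (r - 1) := by simp only [← split]
    _ ≤ ∑' i, f i * (∑' j, f j) ^ (r - 1) := ENNReal.tsum_le_tsum fun i =>
        mul_le_mul_right (ENNReal.rpow_le_rpow (ENNReal.le_tsum i) (sub_nonneg.2 hr)) _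
    _ = (∑' i, f i) ^ r := by rw [ENNReal.tsum_mul_right, split]

theorem rpow_tsum_le_tsum_rpow (f : ι → ℝ≥0∞) {s : ℝ} (hs0 : 0 < s) (hs1 : s ≤ 1) :
    (∑' i, f i) ^ s ≤ ∑' i, f i ^ s := by
  have h := tsum_rpow_le_rpow_tsum (fun i => f i ^ s) (one_le_inv₀ hs0 |>.2 hs1)
  simp only [← ENNReal.rpow_mul, mul_inv_cancel₀ hs0.ne', ENNReal.rpow_one] at h
  exact (ENNReal.le_rpow_inv_iff hs0).1 h

theorem tsum_rpow_half_mul_le (f g : ι → ℝ≥0∞) :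
    ∑' i, (f i * g i) ^ (1 / 2 : ℝ) ≤ ((∑' i, f i) * ∑' i, g i) ^ (1 / 2 : ℝ) := by
  let _ : MeasurableSpace ι := ⊤
  have h := ENNReal.lintegral_mul_le_Lp_mul_Lq (Measure.count : Measure ι)
    Real.HolderConjugate.two_two (f := fun i => f i ^ (1 / 2 : ℝ))
    (g := fun i => g i ^ (1 / 2 : ℝ)) measurable_from_top.aemeasurable
    measurable_from_top.aemeasurable
  simp only [Pi.mul_apply, lintegral_count, ← ENNReal.rpow_mul] at h
  norm_num at h
  simp only [ENNReal.mul_rpow_of_nonneg _ _ (by norm_num : (0 : ℝ) ≤ 1 / 2)]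
  simpa only [one_div] using h

theorem rpow_half_mul_tsum_rpow_le (c : ℝ≥0∞) (v : ι → ℝ≥0∞) {β : ℝ} (hβ0 : 0 < β)
    (hβ2 : β ≤ 2) :
    (c * (∑' i, v i) ^ β) ^ (1 / 2 : ℝ) ≤ ∑' i, (c * v i ^ β) ^ (1 / 2 : ℝ) := by
  have split : ∀ x : ℝ≥0∞, (c * x ^ β) ^ (1 / 2 : ℝ) = c ^ (1 / 2 : ℝ) * x ^ (β / 2) := by
    intro x
    rw [ENNReal.mul_rpow_of_nonneg _ _ (by norm_num), ← ENNReal.rpow_mul, mul_one_div]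
  simp only [split, ENNReal.tsum_mul_left]
  exact mul_le_mul_right (rpow_tsum_le_tsum_rpow v (by linarith) (by linarith)) _

theorem mul_tsum_rpow_le_tsum_mul_tsum {c : ℝ≥0∞} {v f g : ι → ℝ≥0∞} {β : ℝ} (hβ0 : 0 < β)
    (hβ2 : β ≤ 2) (h : ∀ i, c * v i ^ β ≤ f i * g i) :
    c * (∑' i, v i) ^ β ≤ (∑' i, f i) * ∑' i, g i := by
  rw [← ENNReal.rpow_le_rpow_iff (by norm_num : (0 : ℝ) < 1 / 2)]
  calc (c * (∑' i, v i) ^ β) ^ (1 / 2 : ℝ) ≤ ∑' i, (c * v i ^ β) ^ (1 / 2 : ℝ) :=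
        rpow_half_mul_tsum_rpow_le c v hβ0 hβ2
    _ ≤ ∑' i, (f i * g i) ^ (1 / 2 : ℝ) :=
        ENNReal.tsum_le_tsum fun i => ENNReal.rpow_le_rpow (h i) (by norm_num)
    _ ≤ _ := tsum_rpow_half_mul_le f g

theorem mul_tsum_rpow_lt_tsum_mul_tsum [Nonempty ι] {c : ℝ≥0∞} {v f g : ι → ℝ≥0∞} {β : ℝ}
    (hβ0 : 0 < β) (hβ2 : β ≤ 2) (hf : ∑' i, f i ≠ ∞) (hg : ∑' i, g i ≠ ∞)
    (h : ∀ i, c * v i ^ β < f i * g i) :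
    c * (∑' i, v i) ^ β < (∑' i, f i) * ∑' i, g i := by
  rw [← ENNReal.rpow_lt_rpow_iff (by norm_num : (0 : ℝ) < 1 / 2)]
  have hle : ∀ i, (c * v i ^ β) ^ (1 / 2 : ℝ) ≤ (f i * g i) ^ (1 / 2 : ℝ) := fun i =>
    ENNReal.rpow_le_rpow (h i).le (by norm_num)
  have hfin : ∑' i, (c * v i ^ β) ^ (1 / 2 : ℝ) ≠ ∞ :=
    ne_top_of_le_ne_top (ENNReal.rpow_ne_top_of_nonneg (by norm_num) (mul_ne_top hf hg))
      ((ENNReal.tsum_le_tsum hle).trans (tsum_rpow_half_mul_le f g))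
  calc (c * (∑' i, v i) ^ β) ^ (1 / 2 : ℝ) ≤ ∑' i, (c * v i ^ β) ^ (1 / 2 : ℝ) :=
        rpow_half_mul_tsum_rpow_le c v hβ0 hβ2
    _ < ∑' i, (f i * g i) ^ (1 / 2 : ℝ) :=
        ENNReal.tsum_lt_tsum hfin hle
          (ENNReal.rpow_lt_rpow (h (Classical.arbitrary ι)) (by norm_num))
    _ ≤ _ := tsum_rpow_half_mul_le f g

end ENNReal

section MeasureInequalities

variable {X : Type*} [MeasurableSpace X] {μ : Measure X} {𝒬 : Set (Set X)} {U : Set X}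
  {g₁ g₂ : X → ℝ≥0∞} {c : ℝ≥0∞} {β : ℝ}

theorem tsum_setLIntegral_le_of_pairwiseDisjoint (h𝒬 : 𝒬.Countable)
    (hm : ∀ P ∈ 𝒬, MeasurableSet P) (hd : 𝒬.PairwiseDisjoint id) (hU : ∀ P ∈ 𝒬, P ⊆ U)
    (g : X → ℝ≥0∞) :
    ∑' P : 𝒬, ∫⁻ x in (P : Set X), g x ∂μ ≤ ∫⁻ x in U, g x ∂μ := by
  rw [← lintegral_biUnion h𝒬 hm hd]
  exact lintegral_mono_set (iUnion₂_subset hU)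

theorem mul_measure_sUnion_rpow_le (hβ0 : 0 < β) (hβ2 : β ≤ 2) (h𝒬 : 𝒬.Countable)
    (hm : ∀ P ∈ 𝒬, MeasurableSet P) (hd : 𝒬.PairwiseDisjoint id) (hU : ∀ P ∈ 𝒬, P ⊆ U)
    (h : ∀ P ∈ 𝒬, c * μ P ^ β ≤ (∫⁻ x in P, g₁ x ∂μ) * ∫⁻ x in P, g₂ x ∂μ) :
    c * μ (⋃₀ 𝒬) ^ β ≤ (∫⁻ x in U, g₁ x ∂μ) * ∫⁻ x in U, g₂ x ∂μ := by
  rw [measure_sUnion h𝒬 hd hm]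
  exact (ENNReal.mul_tsum_rpow_le_tsum_mul_tsum (ι := 𝒬) hβ0 hβ2 fun P => h P P.2).trans
    (mul_le_mul' (tsum_setLIntegral_le_of_pairwiseDisjoint h𝒬 hm hd hU g₁)
      (tsum_setLIntegral_le_of_pairwiseDisjoint h𝒬 hm hd hU g₂))

theorem mul_measure_sUnion_rpow_lt (hβ0 : 0 < β) (hβ2 : β ≤ 2) (h𝒬 : 𝒬.Countable)
    (hne : 𝒬.Nonempty) (hm : ∀ P ∈ 𝒬, MeasurableSet P) (hd : 𝒬.PairwiseDisjoint id)
    (hU : ∀ P ∈ 𝒬, P ⊆ U) (hg₁ : ∫⁻ x in U, g₁ x ∂μ ≠ ∞) (hg₂ : ∫⁻ x in U, g₂ x ∂μ ≠ ∞)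
    (h : ∀ P ∈ 𝒬, c * μ P ^ β < (∫⁻ x in P, g₁ x ∂μ) * ∫⁻ x in P, g₂ x ∂μ) :
    c * μ (⋃₀ 𝒬) ^ β < (∫⁻ x in U, g₁ x ∂μ) * ∫⁻ x in U, g₂ x ∂μ := by
  have := hne.to_subtype
  have h₁ := tsum_setLIntegral_le_of_pairwiseDisjoint (μ := μ) h𝒬 hm hd hU g₁
  have h₂ := tsum_setLIntegral_le_of_pairwiseDisjoint (μ := μ) h𝒬 hm hd hU g₂
  rw [measure_sUnion h𝒬 hd hm]
  exact (ENNReal.mul_tsum_rpow_lt_tsum_mul_tsum hβ0 hβ2 (ne_top_of_le_ne_top hg₁ h₁)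
    (ne_top_of_le_ne_top hg₂ h₂) fun P => h P P.2).trans_le (mul_le_mul' h₁ h₂)

end MeasureInequalities

section Cubes

variable {n : ℕ} {c c' : Rn n} {l l' : ℝ}

theorem cube_eq_pi (c : Rn n) (l : ℝ) : cube c l = pi univ fun i => Ico (c i) (c i + l) := by
  ext x
  simp [cube]

theorem measurableSet_cube (c : Rn n) (l : ℝ) : MeasurableSet (cube c l) := by
  rw [cube_eq_pi]
  exact MeasurableSet.univ_pi fun _ => measurableSet_Ico

theorem volume_cube (c : Rn n) (l : ℝ) : volume (cube c l) = ENNReal.ofReal l ^ n := by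
  simp [cube_eq_pi, volume_pi_pi, Real.volume_Ico]

theorem mem_cube_self (hl : 0 < l) : c ∈ cube c l :=
  fun _ => ⟨le_rfl, lt_add_of_pos_right _ hl⟩

theorem interior_cube_nonempty (hl : 0 < l) : (interior (cube c l)).Nonempty := by
  rw [cube_eq_pi, interior_pi_set finite_univ, univ_pi_nonempty_iff]
  intro i
  rw [interior_Ico, nonempty_Ioo]
  exact lt_add_of_pos_right _ hl

theorem cube_subset_cube_iff (hl : 0 < l) :
    cube c l ⊆ cube c' l' ↔ ∀ i, c' i ≤ c i ∧ c i + l ≤ c' i + l' := by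
  have hne : (pi univ fun i => Ico (c i) (c i + l)).Nonempty :=
    univ_pi_nonempty_iff.2 fun i => nonempty_Ico.2 (lt_add_of_pos_right _ hl)
  rw [cube_eq_pi, cube_eq_pi, pi_subset_pi_iff, or_iff_left hne.ne_empty]
  simp only [mem_univ, true_implies, Ico_subset_Ico_iff (lt_add_of_pos_right _ hl)]

theorem le_max_one_toReal_of_volume_cube_le (hn : n ≠ 0) {V : ℝ≥0∞} (hV : V ≠ ∞)
    (h : volume (cube c l) ≤ V) : l ≤ max 1 V.toReal := by
  rcases le_or_gt l 1 with hl | hl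
  · exact le_max_of_le_left hl
  refine le_max_of_le_right ((ENNReal.ofReal_le_iff_le_toReal hV).1 ?_)
  rw [volume_cube] at h
  exact (le_self_pow₀ (ENNReal.one_le_ofReal.2 hl.le) hn).trans h

end Cubes

section DyadicGrid

variable {n : ℕ} {𝒟 𝒲 : Set (Set (Rn n))} {Q R : Set (Rn n)}

theorem IsDyadicGrid.measurableSet (hD : IsDyadicGrid 𝒟) (hQ : Q ∈ 𝒟) : MeasurableSet Q := by
  obtain ⟨c, j, rfl⟩ := hD.1 Q hQ
  exact measurableSet_cube c _

theorem IsDyadicGrid.nonempty (hD : IsDyadicGrid 𝒟) (hQ : Q ∈ 𝒟) : Q.Nonempty := by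
  obtain ⟨c, j, rfl⟩ := hD.1 Q hQ
  exact ⟨c, mem_cube_self (zpow_pos two_pos j)⟩

theorem IsDyadicGrid.volume_ne_zero (hD : IsDyadicGrid 𝒟) (hQ : Q ∈ 𝒟) : volume Q ≠ 0 := by
  obtain ⟨c, j, rfl⟩ := hD.1 Q hQ
  rw [volume_cube]
  exact pow_ne_zero _ (ENNReal.ofReal_pos.2 (zpow_pos two_pos j)).ne'

theorem IsDyadicGrid.volume_ne_top (hD : IsDyadicGrid 𝒟) (hQ : Q ∈ 𝒟) : volume Q ≠ ∞ := by
  obtain ⟨c, j, rfl⟩ := hD.1 Q hQ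
  rw [volume_cube]
  exact ENNReal.pow_ne_top ENNReal.ofReal_ne_top

theorem IsDyadicGrid.subset_or_subset (hD : IsDyadicGrid 𝒟) (hQ : Q ∈ 𝒟) (hR : R ∈ 𝒟)
    {x : Rn n} (hxQ : x ∈ Q) (hxR : x ∈ R) : Q ⊆ R ∨ R ⊆ Q := by
  rcases hD.2.1 Q hQ R hR with h | h | h
  · exact Or.inl (inter_eq_left.1 h)
  · exact Or.inr (inter_eq_right.1 h)
  · exact absurd (h ▸ ⟨hxQ, hxR⟩ : x ∈ (∅ : Set (Rn n))) (notMem_empty x)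

theorem IsDyadicGrid.countable_of_pairwiseDisjoint (hD : IsDyadicGrid 𝒟) (h𝒲 : 𝒲 ⊆ 𝒟)
    (hd : 𝒲.PairwiseDisjoint id) : 𝒲.Countable :=
  hd.countable_of_nonempty_interior fun Q hQ => by
    obtain ⟨c, j, rfl⟩ := hD.1 Q (h𝒲 hQ)
    exact interior_cube_nonempty (zpow_pos two_pos j)

theorem IsDyadicGrid.exists_maximal (hn : n ≠ 0) (hD : IsDyadicGrid 𝒟) (h𝒲 : 𝒲 ⊆ 𝒟)
    {V : ℝ≥0∞} (hV : V ≠ ∞) (hbdd : ∀ W ∈ 𝒲, volume W ≤ V) {W : Set (Rn n)} (hW : W ∈ 𝒲) :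
    ∃ M, W ⊆ M ∧ Maximal (· ∈ 𝒲) M := by
  let scales : Set ℤ := {j | ∃ c, cube c ((2 : ℝ) ^ j) ∈ 𝒲 ∧ W ⊆ cube c ((2 : ℝ) ^ j)}
  obtain ⟨N, hN⟩ := pow_unbounded_of_one_lt (max 1 V.toReal) (one_lt_two (α := ℝ))
  have hbd : ∀ j ∈ scales, j ≤ N := by
    rintro j ⟨c, hc𝒲, -⟩
    have := le_max_one_toReal_of_volume_cube_le hn hV (hbdd _ hc𝒲)
    rw [← zpow_natCast] at hN
    exact ((zpow_lt_zpow_iff_right₀ _root_.one_lt_two).1 (this.trans_lt hN)).le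
  have hne : ∃ j, j ∈ scales := by
    obtain ⟨c, j, rfl⟩ := hD.1 W (h𝒲 hW)
    exact ⟨j, c, hW, subset_rfl⟩
  obtain ⟨j, ⟨c, hM, hWM⟩, hjmax⟩ := Int.exists_greatest_of_bdd ⟨N, hbd⟩ hne
  refine ⟨_, hWM, hM, fun R hR hMR => ?_⟩
  obtain ⟨c', i, rfl⟩ := hD.1 R (h𝒲 hR)
  have hij : (2 : ℝ) ^ i ≤ 2 ^ j :=
    zpow_le_zpow_right₀ one_le_two (hjmax i ⟨c', hR, hWM.trans hMR⟩)
  have hMR' := (cube_subset_cube_iff (zpow_pos two_pos j)).1 hMR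
  refine (cube_subset_cube_iff (zpow_pos two_pos i)).2 fun k => ?_
  constructor <;> linarith [hMR' k]

theorem IsDyadicGrid.pairwiseDisjoint_maximal (hD : IsDyadicGrid 𝒟) (h𝒲 : 𝒲 ⊆ 𝒟) :
    {M | Maximal (· ∈ 𝒲) M}.PairwiseDisjoint id := by
  intro M₁ hM₁ M₂ hM₂ hne
  refine not_not.1 fun hnd => hne ?_
  obtain ⟨x, hx₁, hx₂⟩ := not_disjoint_iff.1 hnd
  rcases hD.subset_or_subset (h𝒲 hM₁.1) (h𝒲 hM₂.1) hx₁ hx₂ with h | h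
  · exact h.antisymm (hM₁.2 hM₂.1 h)
  · exact (hM₂.2 hM₁.1 h).antisymm h

theorem IsDyadicGrid.exists_countable_disjoint_subcover (hn : n ≠ 0) (hD : IsDyadicGrid 𝒟)
    (h𝒲 : 𝒲 ⊆ 𝒟) {V : ℝ≥0∞} (hV : V ≠ ∞) (hbdd : ∀ W ∈ 𝒲, volume W ≤ V) :
    ∃ 𝒬 ⊆ 𝒲, 𝒬.Countable ∧ 𝒬.PairwiseDisjoint id ∧ ⋃₀ 𝒲 ⊆ ⋃₀ 𝒬 := by
  have hd := hD.pairwiseDisjoint_maximal h𝒲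
  refine ⟨_, fun M hM => hM.1, hD.countable_of_pairwiseDisjoint (fun M hM => h𝒲 hM.1) hd, hd,
    fun x hx => ?_⟩
  obtain ⟨W, hW, hxW⟩ := hx
  obtain ⟨M, hWM, hM⟩ := hD.exists_maximal hn h𝒲 hV hbdd hW
  exact ⟨M, hM, hWM hxW⟩

theorem IsDyadicGrid.exists_parent (hn : n ≠ 0) (hD : IsDyadicGrid 𝒟) (hQ : Q ∈ 𝒟) :
    ∃ P ∈ 𝒟, Q ⊆ P ∧ ¬P ⊆ Q ∧ volume P = 2 ^ n * volume Q := by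
  obtain ⟨c, j, rfl⟩ := hD.1 Q hQ
  have hc : c ∈ ⋃ P ∈ {P | P ∈ 𝒟 ∧ ∃ c, P = cube c ((2 : ℝ) ^ (j + 1))}, P := by
    rw [hD.2.2 (j + 1)]
    trivial
  obtain ⟨_, ⟨hP, c', rfl⟩, hcP⟩ := mem_iUnion₂.1 hc
  have hPQ : ¬cube c' ((2 : ℝ) ^ (j + 1)) ⊆ cube c ((2 : ℝ) ^ j) := by
    rw [cube_subset_cube_iff (zpow_pos two_pos _), zpow_add_one₀ two_ne_zero]
    intro h
    have := h ⟨0, Nat.pos_of_ne_zero hn⟩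
    linarith [zpow_pos (two_pos (α := ℝ)) j]
  refine ⟨_, hP, ((hD.subset_or_subset hQ hP (mem_cube_self (zpow_pos two_pos j)) hcP).resolve_right
    hPQ), hPQ, ?_⟩
  rw [volume_cube, volume_cube, zpow_add_one₀ two_ne_zero, ENNReal.ofReal_mul' zero_le_two,
    mul_pow, mul_comm, ENNReal.ofReal_ofNat]

end DyadicGrid

section FractionalAverage

variable {n : ℕ} {α : ℝ} {𝒟 : Set (Set (Rn n))} {g₁ g₂ : Rn n → ℝ≥0∞} {Q : Set (Rn n)}
  {t : ℝ≥0∞}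

def fracAvg (n : ℕ) (α : ℝ) (g₁ g₂ : Rn n → ℝ≥0∞) (Q : Set (Rn n)) : ℝ≥0∞ :=
  (volume Q ^ (-(1 - α / (2 * (n : ℝ)))) * ∫⁻ y in Q, g₁ y) *
    (volume Q ^ (-(1 - α / (2 * (n : ℝ)))) * ∫⁻ y in Q, g₂ y)

theorem fracAvg_le_M2D (hQ : Q ∈ 𝒟) {x : Rn n} (hx : x ∈ Q) :
    fracAvg n α g₁ g₂ Q ≤ M2D n α 𝒟 g₁ g₂ x :=
  le_iSup₂_of_le Q hQ (le_iSup_of_le hx le_rfl)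

theorem lt_M2D_iff {x : Rn n} :
    t < M2D n α 𝒟 g₁ g₂ x ↔ ∃ Q ∈ 𝒟, x ∈ Q ∧ t < fracAvg n α g₁ g₂ Q := by
  simp only [M2D, lt_iSup_iff, exists_prop]
  rfl

theorem fracAvg_eq (hn : n ≠ 0) (h0 : volume Q ≠ 0) (htop : volume Q ≠ ∞) :
    fracAvg n α g₁ g₂ Q = volume Q ^ (α / n - 2) * (∫⁻ y in Q, g₁ y) * ∫⁻ y in Q, g₂ y := by
  have hn' : (n : ℝ) ≠ 0 := Nat.cast_ne_zero.2 hn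
  rw [fracAvg, mul_mul_mul_comm, ← ENNReal.rpow_add _ _ h0 htop, mul_assoc]
  congr 2
  field_simp
  ring

theorem fracAvg_eq_div (hn : n ≠ 0) (h0 : volume Q ≠ 0) (htop : volume Q ≠ ∞) :
    fracAvg n α g₁ g₂ Q = (∫⁻ y in Q, g₁ y) * (∫⁻ y in Q, g₂ y) / volume Q ^ (2 - α / n) := by
  rw [fracAvg_eq hn h0 htop, mul_assoc, ENNReal.div_eq_inv_mul, ← ENNReal.rpow_neg, neg_sub]

theorem lt_fracAvg_iff (hn : n ≠ 0) (h0 : volume Q ≠ 0) (htop : volume Q ≠ ∞) :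
    t < fracAvg n α g₁ g₂ Q ↔
      t * volume Q ^ (2 - α / n) < (∫⁻ y in Q, g₁ y) * ∫⁻ y in Q, g₂ y := by
  rw [fracAvg_eq_div hn h0 htop, ENNReal.lt_div_iff_mul_lt]
  · simp [ENNReal.rpow_eq_zero_iff, h0, htop]
  · simp [ENNReal.rpow_eq_top_iff, h0, htop]

theorem fracAvg_le_iff (hn : n ≠ 0) (h0 : volume Q ≠ 0) (htop : volume Q ≠ ∞) :
    fracAvg n α g₁ g₂ Q ≤ t ↔
      (∫⁻ y in Q, g₁ y) * (∫⁻ y in Q, g₂ y) ≤ t * volume Q ^ (2 - α / n) := by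
  rw [fracAvg_eq_div hn h0 htop, ENNReal.div_le_iff]
  · simp [ENNReal.rpow_eq_zero_iff, h0, htop]
  · simp [ENNReal.rpow_eq_top_iff, h0, htop]

theorem two_sub_div_pos (hn : 0 < n) (hα : α < 2 * n) : 0 < 2 - α / n := by
  rw [sub_pos, div_lt_iff₀ (Nat.cast_pos.2 hn)]
  exact hα

theorem two_sub_div_le_two (hα0 : 0 ≤ α) : 2 - α / n ≤ 2 :=
  sub_le_self _ (div_nonneg hα0 n.cast_nonneg)

end FractionalAverage

section Covering

variable {n : ℕ} {α : ℝ} {𝒟 : Set (Set (Rn n))} {g₁ g₂ : Rn n → ℝ≥0∞} {Q U E : Set (Rn n)}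
  {t : ℝ≥0∞}

theorem IsDyadicGrid.exists_disjoint_lt_fracAvg_subcover (hn : 0 < n) (hD : IsDyadicGrid 𝒟)
    (hU : volume U ≠ ∞)
    (hE : ∀ x ∈ E, ∃ W ∈ 𝒟, x ∈ W ∧ W ⊆ U ∧ t < fracAvg n α g₁ g₂ W) :
    ∃ 𝒬 ⊆ 𝒟, 𝒬.Countable ∧ 𝒬.PairwiseDisjoint id ∧ E ⊆ ⋃₀ 𝒬 ∧ ∀ P ∈ 𝒬, P ⊆ U ∧
      t * volume P ^ (2 - α / n) < (∫⁻ y in P, g₁ y) * ∫⁻ y in P, g₂ y := by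
  obtain ⟨𝒬, h𝒬, hc, hd, hcov⟩ :=
    hD.exists_countable_disjoint_subcover (𝒲 := {W | W ∈ 𝒟 ∧ W ⊆ U ∧ t < fracAvg n α g₁ g₂ W})
      hn.ne' (fun W hW => hW.1) hU fun W hW => measure_mono hW.2.1
  refine ⟨𝒬, fun P hP => (h𝒬 hP).1, hc, hd, fun x hx => ?_, fun P hP => ⟨(h𝒬 hP).2.1, ?_⟩⟩
  · obtain ⟨W, hW, hxW, hWU, htW⟩ := hE x hx
    exact hcov ⟨W, ⟨hW, hWU, htW⟩, hxW⟩
  · have hPD := (h𝒬 hP).1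
    exact (lt_fracAvg_iff hn.ne' (hD.volume_ne_zero hPD) (hD.volume_ne_top hPD)).1 (h𝒬 hP).2.2

theorem IsDyadicGrid.mul_volume_rpow_le_of_forall_exists_subset (hn : 0 < n) (hα0 : 0 ≤ α)
    (hα : α < 2 * n) (hD : IsDyadicGrid 𝒟) (hU : volume U ≠ ∞)
    (hE : ∀ x ∈ E, ∃ W ∈ 𝒟, x ∈ W ∧ W ⊆ U ∧ t < fracAvg n α g₁ g₂ W) :
    t * volume E ^ (2 - α / n) ≤ (∫⁻ y in U, g₁ y) * ∫⁻ y in U, g₂ y := by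
  obtain ⟨𝒬, h𝒬, hc, hd, hE𝒬, h𝒬P⟩ := hD.exists_disjoint_lt_fracAvg_subcover hn hU hE
  calc t * volume E ^ (2 - α / n) ≤ t * volume (⋃₀ 𝒬) ^ (2 - α / n) := by
        gcongr
        exact (two_sub_div_pos hn hα).le
    _ ≤ _ := mul_measure_sUnion_rpow_le (two_sub_div_pos hn hα) (two_sub_div_le_two hα0) hc
        (fun P hP => hD.measurableSet (h𝒬 hP)) hd (fun P hP => (h𝒬P P hP).1)
        fun P hP => (h𝒬P P hP).2.le

theorem IsDyadicGrid.lt_fracAvg_of_forall_exists_subset (hn : 0 < n) (hα0 : 0 ≤ α)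
    (hα : α < 2 * n) (hD : IsDyadicGrid 𝒟) (hQ : Q ∈ 𝒟) (hg₁ : ∫⁻ y in Q, g₁ y ≠ ∞)
    (hg₂ : ∫⁻ y in Q, g₂ y ≠ ∞)
    (hcov : ∀ x ∈ Q, ∃ W ∈ 𝒟, x ∈ W ∧ W ⊆ Q ∧ t < fracAvg n α g₁ g₂ W) :
    t < fracAvg n α g₁ g₂ Q := by
  obtain ⟨𝒬, h𝒬, hc, hd, hQ𝒬, h𝒬P⟩ :=
    hD.exists_disjoint_lt_fracAvg_subcover hn (hD.volume_ne_top hQ) hcov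
  have hne : 𝒬.Nonempty := by
    obtain ⟨x, hx⟩ := hD.nonempty hQ
    obtain ⟨P, hP, -⟩ := hQ𝒬 hx
    exact ⟨P, hP⟩
  rw [lt_fracAvg_iff hn.ne' (hD.volume_ne_zero hQ) (hD.volume_ne_top hQ)]
  calc t * volume Q ^ (2 - α / n) ≤ t * volume (⋃₀ 𝒬) ^ (2 - α / n) := by
        gcongr
        exact (two_sub_div_pos hn hα).le
    _ < _ := mul_measure_sUnion_rpow_lt (two_sub_div_pos hn hα) (two_sub_div_le_two hα0) hc hne
        (fun P hP => hD.measurableSet (h𝒬 hP)) hd (fun P hP => (h𝒬P P hP).1) hg₁ hg₂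
        fun P hP => (h𝒬P P hP).2

end Covering

section MaximalCubes

variable {n : ℕ} {𝒟 : Set (Set (Rn n))} {Ω Q : Set (Rn n)}

def maximalCubes (𝒟 : Set (Set (Rn n))) (Ω : Set (Rn n)) : Set (Set (Rn n)) :=
  {Q | Q ∈ 𝒟 ∧ Q ⊆ Ω ∧ ∀ R ∈ 𝒟, Q ⊆ R → R ⊆ Ω → R = Q}

theorem mem_maximalCubes_iff :
    Q ∈ maximalCubes 𝒟 Ω ↔ Maximal (· ∈ {R | R ∈ 𝒟 ∧ R ⊆ Ω}) Q :=
  ⟨fun ⟨hQ, hQΩ, hmax⟩ => ⟨⟨hQ, hQΩ⟩, fun _ hR hQR => (hmax _ hR.1 hQR hR.2).subset⟩,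
    fun ⟨⟨hQ, hQΩ⟩, hmax⟩ => ⟨hQ, hQΩ, fun _ hR hQR hRΩ => (hmax ⟨hR, hRΩ⟩ hQR).antisymm hQR⟩⟩

theorem IsDyadicGrid.pairwiseDisjoint_maximalCubes (hD : IsDyadicGrid 𝒟) (Ω : Set (Rn n)) :
    (maximalCubes 𝒟 Ω).PairwiseDisjoint id :=
  (hD.pairwiseDisjoint_maximal fun _ hR => hR.1).subset fun _ hQ => mem_maximalCubes_iff.1 hQ

theorem IsDyadicGrid.iUnion_maximalCubes (hn : n ≠ 0) (hD : IsDyadicGrid 𝒟) {V : ℝ≥0∞}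
    (hV : V ≠ ∞) (hbdd : ∀ R ∈ 𝒟, R ⊆ Ω → volume R ≤ V)
    (hΩ : ∀ x ∈ Ω, ∃ R ∈ 𝒟, x ∈ R ∧ R ⊆ Ω) :
    ⋃ Q ∈ maximalCubes 𝒟 Ω, Q = Ω := by
  refine (iUnion₂_subset fun Q hQ => hQ.2.1).antisymm fun x hx => ?_
  obtain ⟨R, hR, hxR, hRΩ⟩ := hΩ x hx
  obtain ⟨M, hRM, hM⟩ := hD.exists_maximal (𝒲 := {R | R ∈ 𝒟 ∧ R ⊆ Ω}) hn (fun _ hR => hR.1)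
    hV (fun R hR => hbdd R hR.1 hR.2) ⟨hR, hRΩ⟩
  exact mem_iUnion₂.2 ⟨M, mem_maximalCubes_iff.2 hM, hRM hxR⟩

end MaximalCubes

section Superlevel

variable {n : ℕ} {α : ℝ} {𝒟 : Set (Set (Rn n))} {g₁ g₂ : Rn n → ℝ≥0∞} {Q R W : Set (Rn n)}
  {s t : ℝ≥0∞}

def dyadicSuperlevel (n : ℕ) (α : ℝ) (𝒟 : Set (Set (Rn n))) (g₁ g₂ : Rn n → ℝ≥0∞)
    (t : ℝ≥0∞) : Set (Rn n) :=
  {x | t < M2D n α 𝒟 g₁ g₂ x}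

theorem dyadicSuperlevel_anti (h : t ≤ s) :
    dyadicSuperlevel n α 𝒟 g₁ g₂ s ⊆ dyadicSuperlevel n α 𝒟 g₁ g₂ t :=
  fun _ hx => h.trans_lt hx

theorem subset_dyadicSuperlevel (hW : W ∈ 𝒟) (ht : t < fracAvg n α g₁ g₂ W) :
    W ⊆ dyadicSuperlevel n α 𝒟 g₁ g₂ t :=
  fun _ hx => ht.trans_le (fracAvg_le_M2D hW hx)

theorem exists_superset_lt_fracAvg (hn : 0 < n) (hα0 : 0 ≤ α) (hα : α < 2 * n)
    (hD : IsDyadicGrid 𝒟) (hg₁ : ∫⁻ x, g₁ x ≠ ∞) (hg₂ : ∫⁻ x, g₂ x ≠ ∞) (hR : R ∈ 𝒟)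
    (hRΩ : R ⊆ dyadicSuperlevel n α 𝒟 g₁ g₂ t) :
    ∃ W ∈ 𝒟, R ⊆ W ∧ t < fracAvg n α g₁ g₂ W := by
  by_cases hcov : ∀ x ∈ R, ∃ W ∈ 𝒟, x ∈ W ∧ W ⊆ R ∧ t < fracAvg n α g₁ g₂ W
  · exact ⟨R, hR, subset_rfl, hD.lt_fracAvg_of_forall_exists_subset hn hα0 hα hR
      (ne_top_of_le_ne_top hg₁ (setLIntegral_le_lintegral _ _))
      (ne_top_of_le_ne_top hg₂ (setLIntegral_le_lintegral _ _)) hcov⟩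
  push Not at hcov
  obtain ⟨x, hxR, hx⟩ := hcov
  obtain ⟨W, hW, hxW, htW⟩ := lt_M2D_iff.1 (hRΩ hxR)
  refine ⟨W, hW, (hD.subset_or_subset hR hW hxR hxW).resolve_right fun hWR => ?_, htW⟩
  exact (hx W hW hxW hWR).not_gt htW

theorem exists_volume_le_of_subset_dyadicSuperlevel (hn : 0 < n) (hα0 : 0 ≤ α)
    (hα : α < 2 * n) (hD : IsDyadicGrid 𝒟) (hg₁ : ∫⁻ x, g₁ x ≠ ∞) (hg₂ : ∫⁻ x, g₂ x ≠ ∞)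
    (ht : t ≠ 0) :
    ∃ V ≠ ∞, ∀ R ∈ 𝒟, R ⊆ dyadicSuperlevel n α 𝒟 g₁ g₂ t → volume R ≤ V := by
  have hβ := two_sub_div_pos hn hα
  refine ⟨((∫⁻ x, g₁ x) * (∫⁻ x, g₂ x) / t) ^ (2 - α / n)⁻¹,
    ENNReal.rpow_ne_top_of_nonneg (inv_nonneg.2 hβ.le) (ENNReal.div_ne_top (mul_ne_top hg₁ hg₂) ht),
    fun R hR hRΩ => ?_⟩
  obtain ⟨W, hW, hRW, htW⟩ := exists_superset_lt_fracAvg hn hα0 hα hD hg₁ hg₂ hR hRΩ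
  rw [lt_fracAvg_iff hn.ne' (hD.volume_ne_zero hW) (hD.volume_ne_top hW)] at htW
  refine (measure_mono hRW).trans ((ENNReal.le_rpow_inv_iff hβ).2 ?_)
  rw [ENNReal.le_div_iff_mul_le (Or.inl ht) (Or.inr (mul_ne_top hg₁ hg₂)), mul_comm]
  exact htW.le.trans (mul_le_mul' (setLIntegral_le_lintegral _ _) (setLIntegral_le_lintegral _ _))

theorem dyadicSuperlevel_eq_iUnion_maximalCubes (hn : 0 < n) (hα0 : 0 ≤ α) (hα : α < 2 * n)
    (hD : IsDyadicGrid 𝒟) (hg₁ : ∫⁻ x, g₁ x ≠ ∞) (hg₂ : ∫⁻ x, g₂ x ≠ ∞) (ht : t ≠ 0) :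
    dyadicSuperlevel n α 𝒟 g₁ g₂ t =
      ⋃ Q ∈ maximalCubes 𝒟 (dyadicSuperlevel n α 𝒟 g₁ g₂ t), Q := by
  obtain ⟨V, hV, hbdd⟩ := exists_volume_le_of_subset_dyadicSuperlevel hn hα0 hα hD hg₁ hg₂ ht
  refine (hD.iUnion_maximalCubes hn.ne' hV hbdd fun x hx => ?_).symm
  obtain ⟨W, hW, hxW, htW⟩ := lt_M2D_iff.1 hx
  exact ⟨W, hW, hxW, subset_dyadicSuperlevel hW htW⟩

theorem lt_fracAvg_of_mem_maximalCubes (hn : 0 < n) (hα0 : 0 ≤ α) (hα : α < 2 * n)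
    (hD : IsDyadicGrid 𝒟) (hg₁ : ∫⁻ x, g₁ x ≠ ∞) (hg₂ : ∫⁻ x, g₂ x ≠ ∞)
    (hQ : Q ∈ maximalCubes 𝒟 (dyadicSuperlevel n α 𝒟 g₁ g₂ t)) :
    t < fracAvg n α g₁ g₂ Q := by
  obtain ⟨W, hW, hQW, htW⟩ := exists_superset_lt_fracAvg hn hα0 hα hD hg₁ hg₂ hQ.1 hQ.2.1
  rwa [← hQ.2.2 W hW hQW (subset_dyadicSuperlevel hW htW)]

theorem fracAvg_le_of_mem_maximalCubes (hn : 0 < n) (hD : IsDyadicGrid 𝒟)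
    (hQ : Q ∈ maximalCubes 𝒟 (dyadicSuperlevel n α 𝒟 g₁ g₂ t)) :
    fracAvg n α g₁ g₂ Q ≤ 2 ^ (2 * (n : ℝ) - α) * t := by
  obtain ⟨hQD, -, hmax⟩ := hQ
  obtain ⟨P, hPD, hQP, hPQ, hvol⟩ := hD.exists_parent hn.ne' hQD
  obtain ⟨y, hyP, hyΩ⟩ := not_subset.1 fun hPΩ => hPQ (hmax P hPD hQP hPΩ).subset
  have hP : fracAvg n α g₁ g₂ P ≤ t := (fracAvg_le_M2D hPD hyP).trans (not_lt.1 hyΩ)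
  rw [fracAvg_le_iff hn.ne' (hD.volume_ne_zero hPD) (hD.volume_ne_top hPD)] at hP
  rw [fracAvg_le_iff hn.ne' (hD.volume_ne_zero hQD) (hD.volume_ne_top hQD)]
  calc (∫⁻ y in Q, g₁ y) * ∫⁻ y in Q, g₂ y ≤ (∫⁻ y in P, g₁ y) * ∫⁻ y in P, g₂ y :=
        mul_le_mul' (lintegral_mono_set hQP) (lintegral_mono_set hQP)
    _ ≤ t * volume P ^ (2 - α / n) := hP
    _ = 2 ^ (2 * (n : ℝ) - α) * t * volume Q ^ (2 - α / n) := by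
        rw [hvol, ENNReal.mul_rpow_of_ne_top (by simp) (hD.volume_ne_top hQD),
          ← ENNReal.rpow_natCast, ← ENNReal.rpow_mul,
          show (n : ℝ) * (2 - α / n) = 2 * n - α by field_simp]
        ring

theorem mul_volume_dyadicSuperlevel_inter_rpow_le (hn : 0 < n) (hα0 : 0 ≤ α)
    (hα : α < 2 * n) (hD : IsDyadicGrid 𝒟)
    (hQ : Q ∈ maximalCubes 𝒟 (dyadicSuperlevel n α 𝒟 g₁ g₂ t))
    (hs : 2 ^ (2 * (n : ℝ) - α) * t ≤ s) :
    s * volume (dyadicSuperlevel n α 𝒟 g₁ g₂ s ∩ Q) ^ (2 - α / n) ≤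
      (∫⁻ y in Q, g₁ y) * ∫⁻ y in Q, g₂ y := by
  have hts : t ≤ s := le_trans (le_mul_of_one_le_left' (ENNReal.one_le_rpow one_le_two
    (by linarith))) hs
  refine hD.mul_volume_rpow_le_of_forall_exists_subset hn hα0 hα (hD.volume_ne_top hQ.1) ?_
  rintro x ⟨hxΩ, hxQ⟩
  obtain ⟨W, hW, hxW, hsW⟩ := lt_M2D_iff.1 hxΩ
  refine ⟨W, hW, hxW, (hD.subset_or_subset hW hQ.1 hxW hxQ).resolve_right fun hQW => ?_, hsW⟩
  -- a witness containing `Q` lies in `Ω_t`, so it is `Q`, whose average is at most `s`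
  have hWQ : W = Q :=
    hQ.2.2 W hW hQW ((subset_dyadicSuperlevel hW hsW).trans (dyadicSuperlevel_anti hts))
  rw [hWQ] at hsW
  exact (hsW.trans_le ((fracAvg_le_of_mem_maximalCubes hn hD hQ).trans hs)).false

theorem volume_dyadicSuperlevel_inter_le_half (hn : 0 < n) (hα0 : 0 ≤ α) (hα : α < 2 * n)
    (hD : IsDyadicGrid 𝒟) (ht0 : t ≠ 0) (htt : t ≠ ∞)
    (hQ : Q ∈ maximalCubes 𝒟 (dyadicSuperlevel n α 𝒟 g₁ g₂ t)) :
    volume (dyadicSuperlevel n α 𝒟 g₁ g₂ (t * 2 ^ ((2 - α / n) * (n + 1))) ∩ Q) ≤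
      volume Q / 2 := by
  have hβ := two_sub_div_pos hn hα
  set E := dyadicSuperlevel n α 𝒟 g₁ g₂ (t * 2 ^ ((2 - α / n) * (n + 1))) ∩ Q
  have ha : (2 : ℝ≥0∞) ^ ((2 - α / n) * (n + 1)) = 2 ^ (2 * (n : ℝ) - α) * 2 ^ (2 - α / n) := by
    rw [← ENNReal.rpow_add _ _ two_ne_zero ofNat_ne_top]
    congr 1
    field_simp
  have hc0 : 2 ^ (2 * (n : ℝ) - α) * t ≠ 0 := mul_ne_zero (by simp) ht0
  have hct : 2 ^ (2 * (n : ℝ) - α) * t ≠ ∞ := mul_ne_top (by simp) htt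
  have hlow := mul_volume_dyadicSuperlevel_inter_rpow_le hn hα0 hα hD hQ
    (s := t * 2 ^ ((2 - α / n) * (n + 1))) (by
      rw [ha, mul_comm t, mul_assoc]
      exact mul_le_mul_right (le_mul_of_one_le_left' (ENNReal.one_le_rpow one_le_two hβ)) _)
  have hup := (fracAvg_le_iff hn.ne' (hD.volume_ne_zero hQ.1) (hD.volume_ne_top hQ.1)).1
    (fracAvg_le_of_mem_maximalCubes hn hD hQ)
  have h2 : (2 * volume E) ^ (2 - α / n) ≤ volume Q ^ (2 - α / n) := by
    rw [← ENNReal.mul_le_mul_iff_right hc0 hct, ENNReal.mul_rpow_of_nonneg _ _ hβ.le]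
    calc 2 ^ (2 * (n : ℝ) - α) * t * (2 ^ (2 - α / n) * volume E ^ (2 - α / n))
        = t * 2 ^ ((2 - α / n) * (n + 1)) * volume E ^ (2 - α / n) := by rw [ha]; ring
      _ ≤ 2 ^ (2 * (n : ℝ) - α) * t * volume Q ^ (2 - α / n) := hlow.trans hup
  rw [ENNReal.le_div_iff_mul_le (Or.inl two_ne_zero) (Or.inl ofNat_ne_top), mul_comm]
  exact (ENNReal.rpow_le_rpow_iff hβ).1 h2

end Superlevel

theorem stmt5_general (n : ℕ) (hn : 0 < n) (α : ℝ) (hα0 : 0 ≤ α) (hα : α < 2 * n)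
    (𝒟 : Set (Set (Rn n))) (hD : IsDyadicGrid 𝒟)
    (g₁ g₂ : Rn n → ℝ≥0∞)
    (hg₁i : (∫⁻ x, g₁ x) ≠ ∞) (hg₂i : (∫⁻ x, g₂ x) ≠ ∞) :
    let a : ℝ≥0∞ := 2 ^ (((2:ℝ) - α / n) * ((n:ℝ) + 1))
    let Ω : ℤ → Set (Rn n) := fun k => {x | a ^ k < M2D n α 𝒟 g₁ g₂ x}
    let S : ℤ → Set (Set (Rn n)) := fun k =>
      {Q | Q ∈ 𝒟 ∧ Q ⊆ Ω k ∧ ∀ R ∈ 𝒟, Q ⊆ R → R ⊆ Ω k → R = Q}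
    (∀ k : ℤ, Ω k = ⋃ Q ∈ S k, Q) ∧
    (∀ k : ℤ, ∀ Q ∈ S k,
      a ^ k < volume Q ^ (α / (n:ℝ) - 2) * (∫⁻ y in Q, g₁ y) * (∫⁻ y in Q, g₂ y) ∧
      volume Q ^ (α / (n:ℝ) - 2) * (∫⁻ y in Q, g₁ y) * (∫⁻ y in Q, g₂ y)
        ≤ 2 ^ (2 * (n:ℝ) - α) * a ^ k) ∧
    (∀ k : ℤ, ∀ Q ∈ S k, ∀ R ∈ S k, Q ≠ R → Disjoint Q R) ∧
    (∀ k : ℤ, Ω (k+1) ⊆ Ω k) ∧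
    (∀ k : ℤ, ∀ Q ∈ S k, volume (Ω (k+1) ∩ Q) ≤ volume Q / 2) := by
  intro a Ω S
  have ha1 : 1 ≤ a := ENNReal.one_le_rpow one_le_two
    (mul_pos (two_sub_div_pos hn hα) (by positivity))
  have ha0 : a ≠ 0 := (zero_lt_one.trans_le ha1).ne'
  have hat : a ≠ ∞ := by simp [a]
  refine ⟨fun k => dyadicSuperlevel_eq_iUnion_maximalCubes hn hα0 hα hD hg₁i hg₂i
      (ENNReal.zpow_pos ha0 hat k).ne', fun k Q hQ => ?_,
    fun k Q hQ R hR hne => hD.pairwiseDisjoint_maximalCubes (Ω k) hQ hR hne,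
    fun k => dyadicSuperlevel_anti (ENNReal.zpow_le_of_le ha1 (Int.le_add_one le_rfl)),
    fun k Q hQ => ?_⟩
  · rw [← fracAvg_eq hn.ne' (hD.volume_ne_zero hQ.1) (hD.volume_ne_top hQ.1)]
    exact ⟨lt_fracAvg_of_mem_maximalCubes hn hα0 hα hD hg₁i hg₂i hQ,
      fracAvg_le_of_mem_maximalCubes hn hD hQ⟩
  · show volume (dyadicSuperlevel n α 𝒟 g₁ g₂ (a ^ (k + 1)) ∩ Q) ≤ volume Q / 2
    rw [ENNReal.zpow_add ha0 hat, zpow_one]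
    exact volume_dyadicSuperlevel_inter_le_half hn hα0 hα hD (ENNReal.zpow_pos ha0 hat k).ne'
      (ENNReal.zpow_ne_top ha0 hat k) hQ

/-- Calderón–Zygmund decomposition of the superlevel sets of the
bilinear dyadic fractional maximal function into maximal dyadic cubes, forming
a sparse family with the two-sided average bounds. -/
theorem stmt5 (n : ℕ) (hn : 0 < n) (α : ℝ) (hα0 : 0 ≤ α) (hα : α < 2 * n)
    (𝒟 : Set (Set (Rn n))) (hD : IsDyadicGrid 𝒟)
    (g₁ g₂ : Rn n → ℝ≥0∞) (hg₁ : Measurable g₁) (hg₂ : Measurable g₂)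
    (hg₁i : (∫⁻ x, g₁ x) ≠ ∞) (hg₂i : (∫⁻ x, g₂ x) ≠ ∞) :
    let a : ℝ≥0∞ := 2 ^ (((2:ℝ) - α / n) * ((n:ℝ) + 1))
    let Ω : ℤ → Set (Rn n) := fun k => {x | a ^ k < M2D n α 𝒟 g₁ g₂ x}
    let S : ℤ → Set (Set (Rn n)) := fun k =>
      {Q | Q ∈ 𝒟 ∧ Q ⊆ Ω k ∧ ∀ R ∈ 𝒟, Q ⊆ R → R ⊆ Ω k → R = Q}
    (∀ k : ℤ, Ω k = ⋃ Q ∈ S k, Q) ∧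
    (∀ k : ℤ, ∀ Q ∈ S k,
      a ^ k < volume Q ^ (α / (n:ℝ) - 2) * (∫⁻ y in Q, g₁ y) * (∫⁻ y in Q, g₂ y) ∧
      volume Q ^ (α / (n:ℝ) - 2) * (∫⁻ y in Q, g₁ y) * (∫⁻ y in Q, g₂ y)
        ≤ 2 ^ (2 * (n:ℝ) - α) * a ^ k) ∧
    (∀ k : ℤ, ∀ Q ∈ S k, ∀ R ∈ S k, Q ≠ R → Disjoint Q R) ∧
    (∀ k : ℤ, Ω (k+1) ⊆ Ω k) ∧
    (∀ k : ℤ, ∀ Q ∈ S k, volume (Ω (k+1) ∩ Q) ≤ volume Q / 2) :=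
  stmt5_general n hn α hα0 hα 𝒟 hD g₁ g₂ hg₁i hg₂i
end
end
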